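/- arXiv:1612.01902 — 3 statements merged into one kernel-verified Lean document; each statement's English description precedes it below -/
import Mathlib

section
/- For every real α ∈ (0,2) with α ≠ 1 and every integer b ≥ 2, the sum over k from 2 to b of k·Γ(k-α)/Γ(k+1) equals Γ(2-α)/(α-1) − Γ(b-α+1)·b·(b+1)/((α-1)·Γ(b+2)). -/
/-!
Since `Γ(k + 1) = k Γ(k)`, the summand is `Γ(k - α) / Γ(k)`, and the functional equation
`Γ(k + 1 - α) = (k - α) Γ(k - α)` makes `(1 - α) Γ(k - α) / Γ(k)` the difference of consecutive
values of `k ↦ Γ(k - α) / Γ(k - 1)`. The sum therefore telescopes, and rewriting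
`Γ(b + 2) = (b + 1) b Γ(b)` gives the stated closed form.
-/

open Real Finset

namespace Real

theorem mul_Gamma_div_Gamma_add_one {s : ℝ} (hs : s ≠ 0) (t : ℝ) :
    s * Gamma t / Gamma (s + 1) = Gamma t / Gamma s := by
  rw [Gamma_add_one hs, mul_div_mul_left _ _ hs]

theorem Gamma_add_one_sub_div_sub_Gamma_sub_div {s α : ℝ} (hs : s - 1 ≠ 0) (hsα : s - α ≠ 0) :
    Gamma (s + 1 - α) / Gamma s - Gamma (s - α) / Gamma (s - 1) =
      (1 - α) * (Gamma (s - α) / Gamma s) := by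
  have hΓs : Gamma s = (s - 1) * Gamma (s - 1) := by
    rw [← Gamma_add_one hs, sub_add_cancel]
  rw [add_sub_right_comm, Gamma_add_one hsα, hΓs]
  rcases eq_or_ne (Gamma (s - 1)) 0 with h | h
  · simp [h]
  · field_simp
    ring

theorem sum_Icc_Gamma_sub_div_Gamma {α : ℝ} (hα : α < 2) {b : ℕ} (hb : 1 ≤ b) :
    (1 - α) * ∑ k ∈ Icc 2 b, Gamma (k - α) / Gamma k =
      Gamma (b + 1 - α) / Gamma b - Gamma (2 - α) := by
  let f : ℕ → ℝ := fun n => Gamma (n - α) / Gamma (n - 1)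
  have hstep : ∀ k ∈ Ico 2 (b + 1), (1 - α) * (Gamma (k - α) / Gamma k) = f (k + 1) - f k := by
    intro k hk
    have hk2 : (2 : ℝ) ≤ k := by exact_mod_cast (mem_Ico.mp hk).1
    simp only [f, Nat.cast_add_one, add_sub_cancel_right]
    rw [Gamma_add_one_sub_div_sub_Gamma_sub_div (by linarith) (by linarith)]
  rw [mul_sum, ← Ico_add_one_right_eq_Icc, sum_congr rfl hstep, sum_Ico_sub f (by omega)]
  norm_num [f]

end Real

theorem sum_k_gamma_ratio_general (α : ℝ) (hα2 : α < 2) (hα1 : α ≠ 1)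
    (b : ℕ) (hb : 2 ≤ b) :
    ∑ k ∈ Finset.Icc 2 b, (k : ℝ) * Real.Gamma ((k : ℝ) - α) / Real.Gamma ((k : ℝ) + 1) =
      Real.Gamma (2 - α) / (α - 1) -
        Real.Gamma ((b : ℝ) - α + 1) * (b : ℝ) * ((b : ℝ) + 1) /
          ((α - 1) * Real.Gamma ((b : ℝ) + 2)) := by
  have hterm : ∀ k ∈ Icc 2 b,
      (k : ℝ) * Gamma (k - α) / Gamma (k + 1) = Gamma (k - α) / Gamma k := fun k hk =>
    mul_Gamma_div_Gamma_add_one (by exact_mod_cast (by grind : k ≠ 0)) _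
  have hbpos : (0 : ℝ) < b := by exact_mod_cast (by omega : 0 < b)
  have hΓb2 : Gamma (b + 2) = (b + 1) * b * Gamma b := by
    rw [show (b : ℝ) + 2 = b + 1 + 1 by ring, Gamma_add_one (by positivity),
      Gamma_add_one hbpos.ne', mul_assoc]
  have hsum := sum_Icc_Gamma_sub_div_Gamma hα2 (by omega : 1 ≤ b)
  have hα : 1 - α ≠ 0 := sub_ne_zero.mpr hα1.symm
  rw [sum_congr rfl hterm, eq_div_of_mul_eq hα ((mul_comm _ _).trans hsum), hΓb2,
    show (b : ℝ) - α + 1 = b + 1 - α by ring]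
  have hΓb : Gamma b ≠ 0 := (Gamma_pos_of_pos hbpos).ne'
  field_simp
  ring

theorem sum_k_gamma_ratio (α : ℝ) (hα0 : 0 < α) (hα2 : α < 2) (hα1 : α ≠ 1)
    (b : ℕ) (hb : 2 ≤ b) :
    ∑ k ∈ Finset.Icc 2 b, (k : ℝ) * Real.Gamma ((k : ℝ) - α) / Real.Gamma ((k : ℝ) + 1) =
      Real.Gamma (2 - α) / (α - 1) -
        Real.Gamma ((b : ℝ) - α + 1) * (b : ℝ) * ((b : ℝ) + 1) /
          ((α - 1) * Real.Gamma ((b : ℝ) + 2)) :=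
  sum_k_gamma_ratio_general α hα2 hα1 b hb
end

section
/- For α ∈ (1,2), the limit as b → ∞ of b^(α-1) · Γ(b-α+1)·b·(b+1)/((α-1)·Γ(b+2)) equals 1/(α-1); in particular, for α ∈ (1,2), the limit as b → ∞ of ∑_{k=2}^{b} k·Γ(k-α)/Γ(k+1) equals Γ(2-α)/(α-1). -/
/-!
Since `Γ(x + 1) = x Γ(x)`, the summand `k Γ(k - α) / Γ(k + 1)` equals `T(k - 1) - T(k)` for
`T = gammaSumTail α`, so the partial sums telescope to
`Γ(2 - α) / (α - 1) - T(b)`. Gauss's product formula for `Γ(-α)` gives `Γ(b + 1 - α) ~ b^(-α) b!`,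
hence `b^(α - 1) T(b) → 1 / (α - 1)`, and `T(b) → 0` because `α > 1`.
-/

open Real Finset Filter Topology
open scoped Nat

namespace Real

theorem Gamma_add_nat_eq_mul_prod {s : ℝ} (hs : ∀ m : ℕ, s ≠ -m) (n : ℕ) :
    Gamma (s + n) = Gamma s * ∏ j ∈ range n, (s + j) := by
  induction n with
  | zero => simp
  | succ n ih =>
    have hne : s + n ≠ 0 := fun h => hs n (by linarith)
    rw [prod_range_succ, ← mul_assoc, ← ih, Nat.cast_succ, ← add_assoc, Gamma_add_one hne,
      mul_comm]

theorem tendsto_Gamma_nat_add_div_rpow_mul_factorial {s : ℝ} (hs : ∀ m : ℕ, s ≠ -m) :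
    Tendsto (fun n : ℕ => Gamma (n + 1 + s) / (n ^ s * n !)) atTop (𝓝 1) := by
  have hΓ : Gamma s ≠ 0 := Gamma_ne_zero hs
  have h := (tendsto_const_nhds (x := Gamma s)).div (GammaSeq_tendsto_Gamma s) hΓ
  rw [div_self hΓ] at h
  refine h.congr fun n => ?_
  rw [Pi.div_apply, GammaSeq, div_div_eq_mul_div, ← Gamma_add_nat_eq_mul_prod hs, Nat.cast_succ,
    add_comm s]

end Real

noncomputable def gammaSumTail (α : ℝ) (b : ℕ) : ℝ :=
  Gamma ((b : ℝ) - α + 1) * b * (b + 1) / ((α - 1) * Gamma ((b : ℝ) + 2))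

theorem gammaSumTail_one (α : ℝ) : gammaSumTail α 1 = Gamma (2 - α) / (α - 1) := by
  norm_num [gammaSumTail, show (1 : ℝ) - α + 1 = 2 - α by ring, show (1 : ℝ) + 2 = 2 + 1 by ring]
  exact mul_div_mul_right _ _ two_ne_zero

theorem gammaSumTail_sub_gammaSumTail_succ {α : ℝ} (hα1 : α ≠ 1) (hα2 : α < 2) {b : ℕ}
    (hb : 1 ≤ b) :
    gammaSumTail α b - gammaSumTail α (b + 1) =
      (b + 1 : ℕ) * Gamma ((b + 1 : ℕ) - α) / Gamma ((b + 1 : ℕ) + 1) := by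
  have hpos : (0 : ℝ) < b + 1 - α := by
    have : (1 : ℝ) ≤ b := by exact_mod_cast hb
    linarith
  have hα : α - 1 ≠ 0 := sub_ne_zero.mpr hα1
  have hΓ : 0 < Gamma ((b : ℝ) + 2) := Gamma_pos_of_pos (by positivity)
  have h1 : Gamma ((b : ℝ) + 1 - α + 1) = (b + 1 - α) * Gamma (b + 1 - α) :=
    Gamma_add_one hpos.ne'
  have h2 : Gamma ((b : ℝ) + 2 + 1) = (b + 2) * Gamma (b + 2) := Gamma_add_one (by positivity)
  simp only [gammaSumTail]
  push_cast
  rw [show (b : ℝ) + 1 + 2 = b + 2 + 1 by ring, h1, h2,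
    show (b : ℝ) - α + 1 = b + 1 - α by ring, show (b : ℝ) + 1 + 1 = b + 2 by ring]
  field_simp
  ring

theorem sum_Icc_two_eq_sub_gammaSumTail {α : ℝ} (hα1 : α ≠ 1) (hα2 : α < 2) {b : ℕ}
    (hb : 1 ≤ b) :
    ∑ k ∈ Icc 2 b, (k : ℝ) * Gamma (k - α) / Gamma (k + 1) =
      Gamma (2 - α) / (α - 1) - gammaSumTail α b := by
  induction b, hb using Nat.le_induction with
  | base => simp [gammaSumTail_one]
  | succ b hb ih =>
    rw [sum_Icc_succ_top (by omega), ih, ← gammaSumTail_sub_gammaSumTail_succ hα1 hα2 hb]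
    ring

theorem tendsto_rpow_mul_gammaSumTail {α : ℝ} (hα : ∀ m : ℕ, α ≠ m) :
    Tendsto (fun b : ℕ => (b : ℝ) ^ (α - 1) * gammaSumTail α b) atTop (𝓝 (1 / (α - 1))) := by
  have h := (tendsto_Gamma_nat_add_div_rpow_mul_factorial (s := -α)
    fun m h => hα m (neg_inj.mp h)).div_const (α - 1)
  refine h.congr' ?_
  filter_upwards [eventually_ne_atTop 0] with b hb
  have hb' : (b : ℝ) ≠ 0 := by exact_mod_cast hb
  have hα1 : α - 1 ≠ 0 := sub_ne_zero.mpr (by exact_mod_cast hα 1)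
  have hfac : Gamma ((b : ℝ) + 2) = (b + 1) * b ! := by
    rw [show (b : ℝ) + 2 = (b + 1 : ℕ) + 1 by push_cast; ring, Gamma_nat_eq_factorial,
      Nat.factorial_succ]
    push_cast; ring
  rw [gammaSumTail, hfac, rpow_neg (Nat.cast_nonneg b), rpow_sub_one hb',
    show (b : ℝ) + 1 + -α = b - α + 1 by ring]
  field_simp

theorem tendsto_gammaSumTail {α : ℝ} (hα : ∀ m : ℕ, α ≠ m) (hα1 : 1 < α) :
    Tendsto (gammaSumTail α) atTop (𝓝 0) := by
  have hpow : Tendsto (fun b : ℕ => (b : ℝ) ^ (-(α - 1))) atTop (𝓝 0) :=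
    (tendsto_rpow_neg_atTop (by linarith)).comp tendsto_natCast_atTop_atTop
  have h := (tendsto_rpow_mul_gammaSumTail hα).mul hpow
  rw [mul_zero] at h
  refine h.congr' ?_
  filter_upwards [eventually_ne_atTop 0] with b hb
  have hb' : (0 : ℝ) < b := by exact_mod_cast Nat.pos_of_ne_zero hb
  rw [mul_right_comm, ← rpow_add hb', add_neg_cancel, rpow_zero, one_mul]

theorem limit_k_gamma_ratio (α : ℝ) (hα1 : 1 < α) (hα2 : α < 2) :
    Filter.Tendsto
      (fun b : ℕ => (b : ℝ) ^ (α - 1) *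
        (Real.Gamma ((b : ℝ) - α + 1) * (b : ℝ) * ((b : ℝ) + 1) /
          ((α - 1) * Real.Gamma ((b : ℝ) + 2))))
      Filter.atTop (nhds (1 / (α - 1))) ∧
    Filter.Tendsto
      (fun b : ℕ => ∑ k ∈ Finset.Icc 2 b,
        (k : ℝ) * Real.Gamma ((k : ℝ) - α) / Real.Gamma ((k : ℝ) + 1))
      Filter.atTop (nhds (Real.Gamma (2 - α) / (α - 1))) := by
  have hα : ∀ m : ℕ, α ≠ m := by
    rintro m rfl
    have : 1 < m ∧ m < 2 := ⟨by exact_mod_cast hα1, by exact_mod_cast hα2⟩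
    omega
  refine ⟨tendsto_rpow_mul_gammaSumTail hα, ?_⟩
  have h := (tendsto_gammaSumTail hα hα1).const_sub (Real.Gamma (2 - α) / (α - 1))
  rw [sub_zero] at h
  refine h.congr' ?_
  filter_upwards [eventually_ge_atTop 1] with b hb
  exact (sum_Icc_two_eq_sub_gammaSumTail hα1.ne' hα2 hb).symm
end

section
/- For α ∈ (1,2) and integer r ≥ 3, the function x_r(t) = (1/(2(r-1)!))·(1+t)^{-α/(α-1)}·(αt/(1+t))^{r-1} satisfies x_r'(t) = α·x_{r-1}(t)·x₁(t)/x₀(t)^{2-α} − (α/(α-1))·x_r(t)·x₀(t)^{α-1} with x_r(0) = 0, where x₀(t) = (1+t)^{-1/(α-1)}, x₁(t) = (1+t)^{-α/(α-1)}, and x_{r-1}(t) = (1/(2(r-2)!))·(1+t)^{-α/(α-1)}·(αt/(1+t))^{r-2}. -/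
/-!
With `u = 1 + t`, the powers of `x₀` collapse to `x₀ ^ (α - 1) = u⁻¹` and `x₁ / x₀ ^ (2 - α) = u⁻²`.
The product rule applied to `u ^ (-α/(α-1)) * (α t / u) ^ (r - 1)` then yields exactly the two terms
of the equation, the factor `r - 1` from the power being absorbed by `(r - 1)! = (r - 1) (r - 2)!`.
-/

open Real

lemma hasDerivAt_one_add_rpow {p t : ℝ} (ht : 0 < 1 + t) :
    HasDerivAt (fun s : ℝ => (1 + s) ^ p) (p * (1 + t) ^ p / (1 + t)) t :=
  (((hasDerivAt_id t).const_add 1).rpow_const (Or.inl ht.ne')).congr_deriv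
    (by rw [id, rpow_sub_one ht.ne']; ring)

lemma hasDerivAt_mul_div_one_add {a t : ℝ} (ht : 1 + t ≠ 0) :
    HasDerivAt (fun s : ℝ => a * s / (1 + s)) (a / (1 + t) ^ 2) t :=
  (((hasDerivAt_id t).const_mul a).div ((hasDerivAt_id t).const_add 1) ht).congr_deriv
    (by simp only [id]; ring)

lemma hasDerivAt_mul_rpow_mul_pow_succ {c p a t : ℝ} (n : ℕ) (ht : 0 < 1 + t) :
    HasDerivAt (fun s : ℝ => c * (1 + s) ^ p * (a * s / (1 + s)) ^ (n + 1))
      ((n + 1) * a * (c * (1 + t) ^ p * (a * t / (1 + t)) ^ n) / (1 + t) ^ 2 +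
        p * (c * (1 + t) ^ p * (a * t / (1 + t)) ^ (n + 1)) / (1 + t)) t := by
  have h := ((hasDerivAt_one_add_rpow (p := p) ht).const_mul c).mul
    ((hasDerivAt_mul_div_one_add (a := a) ht.ne').pow (n + 1))
  refine h.congr_deriv ?_
  simp only [Pi.pow_apply, Nat.add_sub_cancel]
  push_cast
  ring

lemma rpow_neg_inv_sub_one_rpow_sub_one {u α : ℝ} (hu : 0 < u) (hα : α ≠ 1) :
    (u ^ (-(1 / (α - 1)))) ^ (α - 1) = u⁻¹ := by
  have : α - 1 ≠ 0 := sub_ne_zero.mpr hα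
  rw [← rpow_mul hu.le, show -(1 / (α - 1)) * (α - 1) = -1 by field_simp, rpow_neg_one]

lemma rpow_div_rpow_neg_inv_sub_one_rpow_two_sub {u α : ℝ} (hu : 0 < u) (hα : α ≠ 1) :
    u ^ (-(α / (α - 1))) / (u ^ (-(1 / (α - 1)))) ^ (2 - α) = (u ^ 2)⁻¹ := by
  have : α - 1 ≠ 0 := sub_ne_zero.mpr hα
  rw [← rpow_mul hu.le, ← rpow_sub hu,
    show -(α / (α - 1)) - -(1 / (α - 1)) * (2 - α) = -2 by field_simp; ring,
    rpow_neg hu.le, rpow_two]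

lemma succ_mul_one_div_two_mul_factorial_succ (n : ℕ) :
    ((n : ℝ) + 1) * (1 / (2 * ((n + 1).factorial : ℝ))) = 1 / (2 * (n.factorial : ℝ)) := by
  rw [Nat.factorial_succ]
  push_cast
  field_simp

theorem xr_ode_general (α : ℝ) (hα1 : 1 < α) (r : ℕ) (hr : 3 ≤ r) :
    (∀ t : ℝ, 0 ≤ t →
      HasDerivAt
        (fun s : ℝ => (1 / (2 * (Nat.factorial (r - 1) : ℝ))) *
          (1 + s) ^ (-(α / (α - 1))) * (α * s / (1 + s)) ^ (r - 1))
        (α * ((1 / (2 * (Nat.factorial (r - 2) : ℝ))) *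
              (1 + t) ^ (-(α / (α - 1))) * (α * t / (1 + t)) ^ (r - 2)) *
            ((1 + t) ^ (-(α / (α - 1)))) /
            ((1 + t) ^ (-(1 / (α - 1)))) ^ (2 - α) -
          (α / (α - 1)) *
            ((1 / (2 * (Nat.factorial (r - 1) : ℝ))) *
              (1 + t) ^ (-(α / (α - 1))) * (α * t / (1 + t)) ^ (r - 1)) *
            ((1 + t) ^ (-(1 / (α - 1)))) ^ (α - 1)) t) ∧
    ((1 / (2 * (Nat.factorial (r - 1) : ℝ))) *
      (1 + (0:ℝ)) ^ (-(α / (α - 1))) * (α * 0 / (1 + (0:ℝ))) ^ (r - 1) : ℝ) = 0 := by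
  obtain ⟨n, rfl⟩ : ∃ n, r = n + 2 := ⟨r - 2, by omega⟩
  rw [show n + 2 - 1 = n + 1 by omega, show n + 2 - 2 = n by omega]
  refine ⟨fun t ht => ?_, by simp⟩
  have hu : 0 < 1 + t := by linarith
  have hα : α ≠ 1 := hα1.ne'
  refine (hasDerivAt_mul_rpow_mul_pow_succ n hu).congr_deriv ?_
  rw [mul_div_assoc (α * _), rpow_div_rpow_neg_inv_sub_one_rpow_two_sub hu hα,
    rpow_neg_inv_sub_one_rpow_sub_one hu hα, ← succ_mul_one_div_two_mul_factorial_succ n]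
  ring

theorem xr_ode (α : ℝ) (hα1 : 1 < α) (hα2 : α < 2) (r : ℕ) (hr : 3 ≤ r) :
    (∀ t : ℝ, 0 ≤ t →
      HasDerivAt
        (fun s : ℝ => (1 / (2 * (Nat.factorial (r - 1) : ℝ))) *
          (1 + s) ^ (-(α / (α - 1))) * (α * s / (1 + s)) ^ (r - 1))
        (α * ((1 / (2 * (Nat.factorial (r - 2) : ℝ))) *
              (1 + t) ^ (-(α / (α - 1))) * (α * t / (1 + t)) ^ (r - 2)) *
            ((1 + t) ^ (-(α / (α - 1)))) /
            ((1 + t) ^ (-(1 / (α - 1)))) ^ (2 - α) -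
          (α / (α - 1)) *
            ((1 / (2 * (Nat.factorial (r - 1) : ℝ))) *
              (1 + t) ^ (-(α / (α - 1))) * (α * t / (1 + t)) ^ (r - 1)) *
            ((1 + t) ^ (-(1 / (α - 1)))) ^ (α - 1)) t) ∧
    ((1 / (2 * (Nat.factorial (r - 1) : ℝ))) *
      (1 + (0:ℝ)) ^ (-(α / (α - 1))) * (α * 0 / (1 + (0:ℝ))) ^ (r - 1) : ℝ) = 0 :=
  xr_ode_general α hα1 r hr
end
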